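/- For every odd prime p, the Baer subgroup of the Heisenberg group H_p, namely the intersection ⋂_K N_{H_p}(K) of the normalizers of all subgroups K of H_p, equals ζ(H_p). -/

import Mathlib

@[ext]
structure Heis (p : ℕ) where
  x : ZMod p
  y : ZMod p
  z : ZMod p

namespace Heis

variable {p : ℕ}

instance : Mul (Heis p) := ⟨fun a b => ⟨a.x + b.x, a.y + b.y, a.z + b.z + a.x * b.y⟩⟩
instance : One (Heis p) := ⟨⟨0, 0, 0⟩⟩
instance : Inv (Heis p) := ⟨fun a => ⟨-a.x, -a.y, a.x * a.y - a.z⟩⟩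

lemma mul_def (a b : Heis p) :
    a * b = ⟨a.x + b.x, a.y + b.y, a.z + b.z + a.x * b.y⟩ := rfl
lemma one_def : (1 : Heis p) = ⟨0, 0, 0⟩ := rfl
lemma inv_def (a : Heis p) : a⁻¹ = ⟨-a.x, -a.y, a.x * a.y - a.z⟩ := rfl

instance instGroup : Group (Heis p) where
  mul_assoc a b c := by ext <;> simp [mul_def] <;> ring
  one_mul a := by ext <;> simp [mul_def, one_def]
  mul_one a := by ext <;> simp [mul_def, one_def]
  inv_mul_cancel a := by ext <;> simp [mul_def, inv_def, one_def]

end Heis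

/-- The centre subgroup ζ(H_p) = {(0,0,z)}. -/
def Zeta (p : ℕ) : Subgroup (Heis p) where
  carrier := {g | g.x = 0 ∧ g.y = 0}
  one_mem' := ⟨rfl, rfl⟩
  mul_mem' := by
    rintro a b ⟨ha1, ha2⟩ ⟨hb1, hb2⟩
    exact ⟨by simp [Heis.mul_def, ha1, hb1], by simp [Heis.mul_def, ha2, hb2]⟩
  inv_mem' := by
    rintro a ⟨h1, h2⟩
    exact ⟨by simp [Heis.inv_def, h1], by simp [Heis.inv_def, h2]⟩

/-! Central elements normalize every subgroup, and every element of `Zeta p` is central. Conversely,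
conjugation by `g` sends `h` to `(h.x, h.y, h.z + g.x * h.y - g.y * h.x)`, so if `g` normalizes the
cyclic subgroups generated by `(1,0,0)` and `(0,1,0)`, all of whose elements have `z = 0`, then
`g.y = 0` and `g.x = 0`. -/

namespace Heis

variable {p : ℕ}

lemma conj_def (g h : Heis p) :
    g * h * g⁻¹ = ⟨h.x, h.y, h.z + g.x * h.y - g.y * h.x⟩ := by
  ext <;> simp only [mul_def, inv_def] <;> ring

lemma mk_x_zpow (a : ZMod p) (n : ℤ) : (⟨a, 0, 0⟩ : Heis p) ^ n = ⟨n * a, 0, 0⟩ := by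
  induction n using Int.induction_on with
  | zero => simp [one_def]
  | succ n ih => rw [zpow_add_one, ih]; ext <;> simp only [mul_def] <;> push_cast <;> ring
  | pred n ih => rw [zpow_sub_one, ih]; ext <;> simp only [mul_def, inv_def] <;> push_cast <;> ring

lemma mk_y_zpow (b : ZMod p) (n : ℤ) : (⟨0, b, 0⟩ : Heis p) ^ n = ⟨0, n * b, 0⟩ := by
  induction n using Int.induction_on with
  | zero => simp [one_def]
  | succ n ih => rw [zpow_add_one, ih]; ext <;> simp only [mul_def] <;> push_cast <;> ring
  | pred n ih => rw [zpow_sub_one, ih]; ext <;> simp only [mul_def, inv_def] <;> push_cast <;> ring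

lemma z_eq_zero_of_mem_zpowers_mk_x {a : ZMod p} {h : Heis p}
    (hh : h ∈ Subgroup.zpowers (⟨a, 0, 0⟩ : Heis p)) : h.z = 0 := by
  obtain ⟨n, rfl⟩ := Subgroup.mem_zpowers_iff.mp hh
  rw [mk_x_zpow]

lemma z_eq_zero_of_mem_zpowers_mk_y {b : ZMod p} {h : Heis p}
    (hh : h ∈ Subgroup.zpowers (⟨0, b, 0⟩ : Heis p)) : h.z = 0 := by
  obtain ⟨n, rfl⟩ := Subgroup.mem_zpowers_iff.mp hh
  rw [mk_y_zpow]

lemma x_mul_y_eq_of_mem_normalizer {K : Subgroup (Heis p)} (hK : ∀ k ∈ K, k.z = 0)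
    {g h : Heis p} (hg : g ∈ Subgroup.normalizer (K : Set (Heis p))) (hh : h ∈ K) :
    g.x * h.y = g.y * h.x := by
  have hconj := hK _ ((Subgroup.mem_normalizer_iff.mp hg h).mp hh)
  rw [conj_def, hK h hh] at hconj
  linear_combination hconj

lemma zeta_le_center : Zeta p ≤ Subgroup.center (Heis p) := by
  rintro g ⟨hx, hy⟩
  refine Subgroup.mem_center_iff.mpr fun h => ?_
  ext <;> simp only [mul_def, hx, hy] <;> ring

lemma mem_zeta_of_forall_mem_normalizer {g : Heis p}
    (hg : ∀ K : Subgroup (Heis p), g ∈ Subgroup.normalizer (K : Set (Heis p))) : g ∈ Zeta p := by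
  have hy := x_mul_y_eq_of_mem_normalizer (fun _ => z_eq_zero_of_mem_zpowers_mk_x)
    (hg (Subgroup.zpowers ⟨1, 0, 0⟩)) (Subgroup.mem_zpowers _)
  have hx := x_mul_y_eq_of_mem_normalizer (fun _ => z_eq_zero_of_mem_zpowers_mk_y)
    (hg (Subgroup.zpowers ⟨0, 1, 0⟩)) (Subgroup.mem_zpowers _)
  simp only [mul_zero, mul_one] at hx hy
  exact ⟨hx, hy.symm⟩

end Heis

theorem heisenberg_baer_subgroup (p : ℕ) :
    (⨅ K : Subgroup (Heis p), Subgroup.normalizer (K : Set (Heis p))) = Zeta p := by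
  refine le_antisymm (fun g hg => Heis.mem_zeta_of_forall_mem_normalizer ?_) ?_
  · exact Subgroup.mem_iInf.mp hg
  · exact le_iInf fun K => Heis.zeta_le_center.trans (Subgroup.center_le_normalizer _)
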